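/- arXiv:math/0502049 — 4 statements merged into one kernel-verified Lean document; each statement's English description precedes it below -/
import Mathlib

section
/- A separable metric space is zero-dimensional (has a base of clopen sets) if and only if every open cover has a pairwise disjoint open refinement covering the space (covering dimension zero). -/
/-- A separable metric space is zero-dimensional (every point has arbitrarily small
clopen neighborhoods) if and only if it has covering dimension zero (every open cover
admits a pairwise disjoint open refinement covering the space). -/
theorem zeroDim_iff_covDimZero {X : Type*} [MetricSpace X]
    [TopologicalSpace.SeparableSpace X] :
    (∀ x : X, ∀ r : ℝ, 0 < r →
        ∃ U : Set X, IsClopen U ∧ x ∈ U ∧ U ⊆ Metric.ball x r) ↔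
    (∀ 𝒰 : Set (Set X), (∀ U ∈ 𝒰, IsOpen U) → ⋃₀ 𝒰 = Set.univ →
        ∃ 𝒱 : Set (Set X), (∀ V ∈ 𝒱, IsOpen V) ∧ 𝒱.PairwiseDisjoint id ∧
          ⋃₀ 𝒱 = Set.univ ∧ ∀ V ∈ 𝒱, ∃ U ∈ 𝒰, V ⊆ U) := by
  classical
  constructor
  · intro h 𝒰 hop hcov
    by_cases hX : Nonempty X
    · -- the collection of clopen sets contained in some member of 𝒰
      set S : Set (Set X) := {C | IsClopen C ∧ ∃ U ∈ 𝒰, C ⊆ U} with hS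
      have hSopen : ∀ s ∈ S, IsOpen s := fun s hs => hs.1.isOpen
      have hSU : ⋃₀ S = Set.univ := by
        apply Set.eq_univ_of_forall
        intro x
        have hx : x ∈ ⋃₀ 𝒰 := hcov ▸ Set.mem_univ x
        obtain ⟨U, hU, hxU⟩ := hx
        obtain ⟨r, hr, hball⟩ := Metric.isOpen_iff.mp (hop U hU) x hxU
        obtain ⟨C, hC, hxC, hCb⟩ := h x r hr
        exact ⟨C, ⟨hC, U, hU, hCb.trans hball⟩, hxC⟩
      haveI : SecondCountableTopology X :=
        UniformSpace.secondCountable_of_separable X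
      obtain ⟨T, hTc, hTS, hTU⟩ := TopologicalSpace.isOpen_sUnion_countable S hSopen
      rw [hSU] at hTU
      have hTne : T.Nonempty := by
        rcases hX with ⟨x⟩
        have : x ∈ ⋃₀ T := hTU ▸ Set.mem_univ x
        obtain ⟨t, ht, -⟩ := this
        exact ⟨t, ht⟩
      obtain ⟨f, hf⟩ := Set.Countable.exists_eq_range hTc hTne
      have hfS : ∀ n, f n ∈ S := fun n => hTS (hf ▸ Set.mem_range_self n)
      set V : ℕ → Set X := fun n => f n \ ⋃ m < n, f m with hV
      refine ⟨Set.range V, ?_, ?_, ?_, ?_⟩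
      · rintro W ⟨n, rfl⟩
        exact ((hfS n).1.isOpen).sdiff
          (Set.Finite.isClosed_biUnion (Set.finite_Iio n) fun m _ => (hfS m).1.isClosed)
      · rintro A ⟨n, rfl⟩ B ⟨m, rfl⟩ hne
        rcases lt_trichotomy n m with hlt | heq | hgt
        · refine Set.disjoint_left.mpr fun x hxA hxB => ?_
          exact hxB.2 (Set.mem_biUnion hlt hxA.1)
        · exact absurd (congrArg V heq) hne
        · refine Set.disjoint_left.mpr fun x hxA hxB => ?_
          exact hxA.2 (Set.mem_biUnion hgt hxB.1)
      · apply Set.eq_univ_of_forall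
        intro x
        have hx : x ∈ ⋃₀ T := hTU ▸ Set.mem_univ x
        obtain ⟨t, ht, hxt⟩ := hx
        rw [hf] at ht
        obtain ⟨n, rfl⟩ := ht
        have hex : ∃ n, x ∈ f n := ⟨n, hxt⟩
        refine ⟨V (Nat.find hex), ⟨Nat.find hex, rfl⟩, Nat.find_spec hex, ?_⟩
        simp only [Set.mem_iUnion]
        rintro ⟨m, hm, hxm⟩
        exact Nat.find_min hex hm hxm
      · rintro W ⟨n, rfl⟩
        obtain ⟨U, hU, hsub⟩ := (hfS n).2
        exact ⟨U, hU, Set.diff_subset.trans hsub⟩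
    · refine ⟨∅, by simp, by simp, ?_, by simp⟩
      rw [Set.sUnion_empty, eq_comm, Set.univ_eq_empty_iff]
      exact ⟨fun x => hX ⟨x⟩⟩
  · intro h x r hr
    set 𝒰 : Set (Set X) := {Metric.ball x r, (Metric.closedBall x (r/2))ᶜ} with h𝒰
    have hop : ∀ U ∈ 𝒰, IsOpen U := by
      rintro U (rfl | rfl)
      · exact Metric.isOpen_ball
      · exact Metric.isClosed_closedBall.isOpen_compl
    have hcov : ⋃₀ 𝒰 = Set.univ := by
      apply Set.eq_univ_of_forall
      intro y
      by_cases hy : dist y x ≤ r / 2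
      · exact ⟨Metric.ball x r, Set.mem_insert _ _,
          Metric.mem_ball.mpr (lt_of_le_of_lt hy (by linarith))⟩
      · exact ⟨(Metric.closedBall x (r/2))ᶜ, Set.mem_insert_of_mem _ rfl,
          fun hc => hy (Metric.mem_closedBall.mp hc)⟩
    obtain ⟨𝒱, hVop, hVdisj, hVcov, hVref⟩ := h 𝒰 hop hcov
    have hx : x ∈ ⋃₀ 𝒱 := hVcov ▸ Set.mem_univ x
    obtain ⟨V, hV, hxV⟩ := hx
    have hVclosed : IsClosed V := by
      rw [← isOpen_compl_iff]
      have : Vᶜ = ⋃₀ (𝒱 \ {V}) := by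
        ext y
        classical
  constructor
        · intro hy
          have : y ∈ ⋃₀ 𝒱 := hVcov ▸ Set.mem_univ y
          obtain ⟨W, hW, hyW⟩ := this
          refine ⟨W, ⟨hW, fun hWV => hy (hWV ▸ hyW)⟩, hyW⟩
        · rintro ⟨W, ⟨hW, hWV⟩, hyW⟩ hyV
          exact Set.disjoint_left.mp (hVdisj hW hV (by simpa using hWV)) hyW hyV
      rw [this]
      exact isOpen_sUnion fun W hW => hVop W hW.1
    obtain ⟨U, hU, hsub⟩ := hVref V hV
    rcases hU with rfl | rfl
    · exact ⟨V, ⟨hVclosed, hVop V hV⟩, hxV, hsub⟩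
    · exact absurd (hsub hxV) (by simp [Metric.mem_closedBall, dist_self]; positivity)
end

section
/- A metric space admitting a topologically equivalent ultrametric has covering dimension zero: every open cover admits a pairwise disjoint open refinement that covers the space. -/
/-- A metric space admitting a topologically equivalent ultrametric has covering
dimension zero: every open cover admits a pairwise disjoint open refinement
covering the space. -/
theorem covDimZero_of_equivalent_ultrametric {X : Type*} [MetricSpace X]
    (ρ : X → X → ℝ)
    (hρ0 : ∀ x y : X, ρ x y = 0 ↔ x = y)
    (hρsymm : ∀ x y : X, ρ x y = ρ y x)
    (hρnonneg : ∀ x y : X, 0 ≤ ρ x y)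
    (hult : ∀ x y z : X, ρ x z ≤ max (ρ x y) (ρ y z))
    (hequiv : ∀ s : Set X, IsOpen s ↔ ∀ x ∈ s, ∃ r > 0, {y : X | ρ x y < r} ⊆ s) :
    ∀ 𝒰 : Set (Set X), (∀ U ∈ 𝒰, IsOpen U) → ⋃₀ 𝒰 = Set.univ →
      ∃ 𝒱 : Set (Set X), (∀ V ∈ 𝒱, IsOpen V) ∧ 𝒱.PairwiseDisjoint id ∧
        ⋃₀ 𝒱 = Set.univ ∧ ∀ V ∈ 𝒱, ∃ U ∈ 𝒰, V ⊆ U := by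
  intro 𝒰 hopen hcover
  classical
  set B : X → ℝ → Set X := fun x r => {y : X | ρ x y < r} with hB
  set rad : ℕ → ℝ := fun n => ((1 : ℝ) / 2) ^ n with hrad
  have hradpos : ∀ n, 0 < rad n := fun n => pow_pos (by norm_num) n
  have hradanti : ∀ {m n : ℕ}, m ≤ n → rad n ≤ rad m := fun {m n} h =>
    pow_le_pow_of_le_one (by norm_num) (by norm_num) h
  -- two intersecting-center balls of the same radius coincide
  have ball_eq : ∀ (x y : X) (r : ℝ), ρ x y < r → B x r = B y r := by
    intro x y r hxy
    ext w
    simp only [hB, Set.mem_setOf_eq]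
    constructor
    · intro hw
      calc ρ y w ≤ max (ρ y x) (ρ x w) := hult y x w
        _ < r := max_lt (by rwa [← hρsymm]) hw
    · intro hw
      calc ρ x w ≤ max (ρ x y) (ρ y w) := hult x y w
        _ < r := max_lt hxy hw
  -- balls are open
  have ball_open : ∀ (x : X) (r : ℝ), IsOpen (B x r) := by
    intro x r
    rw [hequiv]
    intro z hz
    have hz' : ρ x z < r := hz
    refine ⟨r, lt_of_le_of_lt (hρnonneg x z) hz', ?_⟩
    rw [show {y : X | ρ z y < r} = B z r from rfl, ← ball_eq x z r hz']
  have hself : ∀ (x : X) (r : ℝ), 0 < r → x ∈ B x r := by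
    intro x r hr
    show ρ x x < r
    rw [(hρ0 x x).2 rfl]; exact hr
  -- for each x, some dyadic ball around x fits in a member of 𝒰
  have hex : ∀ x : X, ∃ n : ℕ, ∃ U ∈ 𝒰, B x (rad n) ⊆ U := by
    intro x
    have hx : x ∈ ⋃₀ 𝒰 := by rw [hcover]; trivial
    obtain ⟨U, hU, hxU⟩ := hx
    obtain ⟨r, hr, hsub⟩ := (hequiv U).1 (hopen U hU) x hxU
    obtain ⟨n, hn⟩ := exists_pow_lt_of_lt_one hr (by norm_num : (1 : ℝ) / 2 < 1)
    exact ⟨n, U, hU, fun w hw => hsub (lt_trans hw hn)⟩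
  set nn : X → ℕ := fun x => Nat.find (hex x) with hnn
  have hnspec : ∀ x : X, ∃ U ∈ 𝒰, B x (rad (nn x)) ⊆ U := fun x => Nat.find_spec (hex x)
  -- N x : minimal level of a good ball containing x
  have hex2 : ∀ x : X, ∃ m : ℕ, ∃ y : X, ρ y x < rad (nn y) ∧ nn y = m := by
    intro x
    exact ⟨nn x, x, by rw [(hρ0 x x).2 rfl]; exact hradpos _, rfl⟩
  set N : X → ℕ := fun x => Nat.find (hex2 x) with hN
  have hNspec : ∀ x : X, ∃ y : X, ρ y x < rad (nn y) ∧ nn y = N x :=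
    fun x => Nat.find_spec (hex2 x)
  have hNmin : ∀ (x y : X), ρ y x < rad (nn y) → N x ≤ nn y := by
    intro x y hy
    exact Nat.find_le ⟨y, hy, rfl⟩
  -- the chosen ball around x equals the witness ball
  have hball_wit : ∀ x : X, ∃ y : X, nn y = N x ∧ B x (rad (N x)) = B y (rad (nn y)) := by
    intro x
    obtain ⟨y, hy, hyN⟩ := hNspec x
    refine ⟨y, hyN, ?_⟩
    rw [hyN] at hy ⊢
    exact (ball_eq y x _ hy).symm
  -- key: intersecting chosen balls coincide
  have key : ∀ x x' : X, N x ≤ N x' →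
      (B x (rad (N x)) ∩ B x' (rad (N x'))).Nonempty →
      B x (rad (N x)) = B x' (rad (N x')) := by
    intro x x' hle ⟨z, hz1, hz2⟩
    have hxz : ρ x z < rad (N x) := hz1
    have hx'z : ρ x' z < rad (N x') := hz2
    have hxx' : ρ x x' < rad (N x) := by
      calc ρ x x' ≤ max (ρ x z) (ρ z x') := hult x z x'
        _ < rad (N x) := max_lt hxz (by rw [← hρsymm]; exact lt_of_lt_of_le hx'z (hradanti hle))
    obtain ⟨y, hyN, hyball⟩ := hball_wit x
    -- x' lies in the witness ball around y, so N x' ≤ nn y = N x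
    have hx'mem : x' ∈ B y (rad (nn y)) := by
      rw [← hyball]; exact hxx'
    have hyx' : ρ y x' < rad (nn y) := hx'mem
    have hle' : N x' ≤ N x := by
      have := hNmin x' y hyx'
      rwa [hyN] at this
    have hEq : N x = N x' := le_antisymm hle hle'
    rw [← hEq]
    exact ball_eq x x' _ hxx'
  refine ⟨Set.range (fun x => B x (rad (N x))), ?_, ?_, ?_, ?_⟩
  · rintro V ⟨x, rfl⟩
    exact ball_open x _
  · rintro V ⟨x, rfl⟩ W ⟨x', rfl⟩ hne
    simp only [Function.onFun, id]
    rw [Set.disjoint_iff_inter_eq_empty]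
    by_contra hcon
    rcases le_total (N x) (N x') with h | h
    · exact hne (key x x' h (Set.nonempty_iff_ne_empty.2 hcon))
    · exact hne ((key x' x h (Set.nonempty_iff_ne_empty.2 (by
        rwa [Set.inter_comm] at hcon))).symm)
  · ext z
    simp only [Set.mem_sUnion, Set.mem_range, Set.mem_univ, iff_true]
    exact ⟨B z (rad (N z)), ⟨z, rfl⟩, hself z _ (hradpos _)⟩
  · rintro V ⟨x, rfl⟩
    obtain ⟨y, hyN, hyball⟩ := hball_wit x
    obtain ⟨U, hU, hsub⟩ := hnspec y
    exact ⟨U, hU, by show B x (rad (N x)) ⊆ U; rw [hyball]; exact hsub⟩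
end

section
/- For 1 ≤ x < y and n even, [a₀,a₁,…,aₙ,x] − [a₀,a₁,…,aₙ,y] < (y − x)/(xy + n); for n odd, [a₀,a₁,…,aₙ,y] − [a₀,a₁,…,aₙ,x] < (y − x)/(xy + n). -/
set_option maxHeartbeats 1000000

/-- `cf [a₀,…,aₙ] x` is the continued fraction `[a₀,…,aₙ,x]`. -/
noncomputable def cf (l : List ℝ) (x : ℝ) : ℝ := l.foldr (fun a r => a + 1 / r) x

/-- The list `[a₀, a₁, …, aₙ]` of partial quotients, `a₀ ∈ ℤ`, `aᵢ ∈ ℕ₊`. -/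
noncomputable def cfList (a₀ : ℤ) (a : ℕ → ℕ+) (n : ℕ) : List ℝ :=
  (a₀ : ℝ) :: (List.range n).map (fun i => ((a (i + 1) : ℕ) : ℝ))


noncomputable def G (a : ℕ → ℕ+) (n : ℕ) (x : ℝ) : ℝ :=
  ((List.range n).map (fun i => ((a (i + 1) : ℕ) : ℝ))).foldr (fun a r => a + 1 / r) x

lemma G_zero (a : ℕ → ℕ+) (x : ℝ) : G a 0 x = x := by simp [G]

lemma G_succ (a : ℕ → ℕ+) (n : ℕ) (x : ℝ) :
    G a (n + 1) x = G a n (((a (n + 1) : ℕ) : ℝ) + 1 / x) := by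
  simp [G, List.range_succ]

lemma key (a : ℕ → ℕ+) (n : ℕ) (hn : 1 ≤ n) : ∀ x y : ℝ, 1 ≤ x → x < y →
    1 < G a n x ∧ 1 < G a n y ∧ 0 < (-1 : ℝ) ^ n * (G a n y - G a n x) ∧
    ((-1 : ℝ) ^ n * (G a n y - G a n x)) * (x * y + n - 1) ≤ y - x ∧
    ((-1 : ℝ) ^ n * (G a n y - G a n x)) * (x * y + n) < (y - x) * (G a n x * G a n y) := by
  induction n, hn using Nat.le_induction with
  | base =>
    intro x y hx hxy
    have hx0 : (0 : ℝ) < x := by linarith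
    have hy0 : (0 : ℝ) < y := by linarith
    set A : ℝ := ((a 1 : ℕ) : ℝ) with hA
    have hA1 : (1 : ℝ) ≤ A := by
      rw [hA]; exact Nat.one_le_cast.mpr (a 1).property
    have hGx : G a 1 x = A + 1 / x := by rw [G_succ, G_zero]
    have hGy : G a 1 y = A + 1 / y := by rw [G_succ, G_zero]
    have hix : (0:ℝ) < 1 / x := by positivity
    have hiy : (0:ℝ) < 1 / y := by positivity
    have hinv : 1 / y < 1 / x := one_div_lt_one_div_of_lt hx0 hxy
    refine ⟨?_, ?_, ?_, ?_, ?_⟩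
    · rw [hGx]; linarith
    · rw [hGy]; linarith
    · rw [hGx, hGy]; simp only [pow_one]; linarith
    · rw [hGx, hGy]
      push_cast
      simp only [pow_one]
      have e : (1 / x - 1 / y) * (x * y) = y - x := by field_simp
      linear_combination e
    · rw [hGx, hGy]
      push_cast
      simp only [pow_one]
      have main : (1 / x - 1 / y) * (x * y + 1) < (y - x) * ((A + 1 / x) * (A + 1 / y)) := by
        have e1 : (1 / x - 1 / y) * (x * y + 1) = (y - x) * (1 + (1 / x) * (1 / y)) := by
          field_simp
        rw [e1]
        have h2 : (1:ℝ) + (1 / x) * (1 / y) < (A + 1 / x) * (A + 1 / y) := by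
          nlinarith [mul_pos hix hiy, hix, hiy, hA1]
        exact mul_lt_mul_of_pos_left h2 (by linarith)
      linear_combination main
  | succ n hn ih =>
    intro x y hx hxy
    have hx0 : (0 : ℝ) < x := by linarith
    have hy0 : (0 : ℝ) < y := by linarith
    have hxne : x ≠ 0 := ne_of_gt hx0
    have hyne : y ≠ 0 := ne_of_gt hy0
    set A : ℝ := ((a (n + 1) : ℕ) : ℝ) with hAdef
    have hA1 : (1 : ℝ) ≤ A := by
      rw [hAdef]; exact Nat.one_le_cast.mpr (a (n + 1)).property
    have hix : (0:ℝ) < 1 / x := by positivity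
    have hiy : (0:ℝ) < 1 / y := by positivity
    have hinv : 1 / y < 1 / x := one_div_lt_one_div_of_lt hx0 hxy
    set u : ℝ := A + 1 / y with hu
    set v : ℝ := A + 1 / x with hv
    have hu1 : 1 ≤ u := by rw [hu]; linarith
    have huv : u < v := by rw [hu, hv]; linarith
    obtain ⟨h1, h2, h3, h4, h5⟩ := ih u v hu1 huv
    have hGx : G a (n + 1) x = G a n v := by rw [G_succ]
    have hGy : G a (n + 1) y = G a n u := by rw [G_succ]
    have hsign : (-1 : ℝ) ^ (n + 1) * (G a (n+1) y - G a (n+1) x)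
        = (-1 : ℝ) ^ n * (G a n v - G a n u) := by
      rw [hGx, hGy, pow_succ]; ring
    set D : ℝ := (-1 : ℝ) ^ n * (G a n v - G a n u) with hD
    have hvu : (v - u) * (x * y) = y - x := by rw [hu, hv]; field_simp; ring
    have huvxy : u * v * (x * y) = (A * x + 1) * (A * y + 1) := by
      rw [hu, hv]; field_simp
    have hn1 : (1 : ℝ) ≤ (n : ℝ) := by exact_mod_cast hn
    have hxy0 : (0 : ℝ) < x * y := by positivity
    have h4' : D * (u * v + n - 1) * (x * y) ≤ y - x := by
      calc D * (u * v + n - 1) * (x * y) ≤ (v - u) * (x * y) :=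
            mul_le_mul_of_nonneg_right h4 hxy0.le
        _ = y - x := hvu
    have h5' : D * (u * v + n) * (x * y) < (y - x) * (G a n u * G a n v) := by
      calc D * (u * v + n) * (x * y) < ((v - u) * (G a n u * G a n v)) * (x * y) :=
            mul_lt_mul_of_pos_right h5 hxy0
        _ = (y - x) * (G a n u * G a n v) := by
            rw [show ((v - u) * (G a n u * G a n v)) * (x * y)
                = ((v - u) * (x * y)) * (G a n u * G a n v) by ring, hvu]
    have hAA : (1:ℝ) ≤ A * A :=
      hA1.trans (le_mul_of_one_le_left (by linarith) hA1)
    have hA2 : (0:ℝ) ≤ (A * A - 1) * (x * y) :=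
      mul_nonneg (by linarith) hxy0.le
    have hxy1 : (1:ℝ) ≤ x * y :=
      hx.trans (le_mul_of_one_le_right hx0.le (by linarith))
    have hNX : (0:ℝ) ≤ ((n : ℝ) - 1) * (x * y - 1) :=
      mul_nonneg (by linarith) (by linarith)
    have hAx : (1:ℝ) ≤ A * x :=
      hA1.trans (le_mul_of_one_le_right (by linarith) hx)
    have hAy : (1:ℝ) ≤ A * y :=
      hA1.trans (le_mul_of_one_le_right (by linarith) (by linarith))
    have hexp : D * (u * v + n - 1) * (x * y)
        = D * ((A * x + 1) * (A * y + 1) + ((n : ℝ) - 1) * (x * y)) := by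
      rw [show D * (u * v + n - 1) * (x * y)
          = D * (u * v * (x * y) + ((n : ℝ) - 1) * (x * y)) by ring, huvxy]
    have hexp5 : D * (u * v + n) * (x * y)
        = D * ((A * x + 1) * (A * y + 1) + (n : ℝ) * (x * y)) := by
      rw [show D * (u * v + n) * (x * y)
          = D * (u * v * (x * y) + (n : ℝ) * (x * y)) by ring, huvxy]
    refine ⟨?_, ?_, ?_, ?_, ?_⟩
    · rw [hGx]; exact h2
    · rw [hGy]; exact h1
    · rw [hsign]; exact h3
    · rw [hsign]
      push_cast
      have hbig : x * y + ((n:ℝ) + 1) - 1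
          ≤ (A * x + 1) * (A * y + 1) + ((n : ℝ) - 1) * (x * y) := by
        nlinarith [hA2, hNX, hAx, hAy]
      calc D * (x * y + ((n:ℝ) + 1) - 1)
          ≤ D * ((A * x + 1) * (A * y + 1) + ((n : ℝ) - 1) * (x * y)) :=
            mul_le_mul_of_nonneg_left hbig h3.le
        _ = D * (u * v + n - 1) * (x * y) := hexp.symm
        _ ≤ y - x := h4'
    · rw [hsign, hGx, hGy]
      push_cast
      have hbig : x * y + ((n:ℝ) + 1)
          ≤ (A * x + 1) * (A * y + 1) + (n : ℝ) * (x * y) := by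
        nlinarith [hA2, hNX, hAx, hAy, hxy0]
      calc D * (x * y + ((n:ℝ) + 1))
          ≤ D * ((A * x + 1) * (A * y + 1) + (n : ℝ) * (x * y)) :=
            mul_le_mul_of_nonneg_left hbig h3.le
        _ = D * (u * v + n) * (x * y) := hexp5.symm
        _ < (y - x) * (G a n u * G a n v) := h5'
        _ = (y - x) * (G a n v * G a n u) := by ring

/-- For `1 ≤ x < y` and `n ≥ 1`:
if `n` is even then `[a₀,…,aₙ,x] − [a₀,…,aₙ,y] < (y − x)/(xy + n)`;
if `n` is odd then `[a₀,…,aₙ,y] − [a₀,…,aₙ,x] < (y − x)/(xy + n)`. -/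
theorem cf_difference_estimate (a₀ : ℤ) (a : ℕ → ℕ+) (n : ℕ) (hn : 1 ≤ n)
    (x y : ℝ) (hx : 1 ≤ x) (hxy : x < y) :
    (Even n → cf (cfList a₀ a n) x - cf (cfList a₀ a n) y < (y - x) / (x * y + n)) ∧
    (Odd n → cf (cfList a₀ a n) y - cf (cfList a₀ a n) x < (y - x) / (x * y + n)) := by
  obtain ⟨h1, h2, h3, h4, h5⟩ := key a n hn x y hx hxy
  have hcx : cf (cfList a₀ a n) x = (a₀ : ℝ) + 1 / G a n x := by simp [cf, cfList, G]
  have hcy : cf (cfList a₀ a n) y = (a₀ : ℝ) + 1 / G a n y := by simp [cf, cfList, G]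
  have hGx0 : (0:ℝ) < G a n x := by linarith
  have hGy0 : (0:ℝ) < G a n y := by linarith
  have hden : (0:ℝ) < x * y + n := by
    have hn1 : (1:ℝ) ≤ (n:ℝ) := by exact_mod_cast hn
    nlinarith
  have hprod : (0:ℝ) < G a n x * G a n y := mul_pos hGx0 hGy0
  constructor
  · intro he
    have hsgn : (-1 : ℝ) ^ n = 1 := he.neg_one_pow
    rw [hsgn, one_mul] at h5
    have hdiff : cf (cfList a₀ a n) x - cf (cfList a₀ a n) y
        = (G a n y - G a n x) / (G a n x * G a n y) := by
      rw [hcx, hcy]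
      field_simp
      ring
    rw [hdiff, div_lt_div_iff₀ hprod hden]
    linarith [h5]
  · intro ho
    have hsgn : (-1 : ℝ) ^ n = -1 := ho.neg_one_pow
    rw [hsgn] at h5
    have hdiff : cf (cfList a₀ a n) y - cf (cfList a₀ a n) x
        = (G a n x - G a n y) / (G a n x * G a n y) := by
      rw [hcx, hcy]
      field_simp
      ring
    rw [hdiff, div_lt_div_iff₀ hprod hden]
    nlinarith [h5]
end

section
/- Every separable zero-dimensional metric space embeds homeomorphically into the Baire space ℕ → ℕ (equivalently, into the irrational numbers). -/
open TopologicalSpace Set Filter Topology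

/-- Every separable zero-dimensional metric space embeds homeomorphically into
the Baire space `ℕ → ℕ`. -/
theorem embeds_in_baire {X : Type*} [MetricSpace X]
    [TopologicalSpace.SeparableSpace X]
    (h0 : ∀ x : X, ∀ r : ℝ, 0 < r →
      ∃ U : Set X, IsClopen U ∧ x ∈ U ∧ U ⊆ Metric.ball x r) :
    ∃ f : X → (ℕ → ℕ), Topology.IsEmbedding f := by
  classical
  haveI : SecondCountableTopology X := UniformSpace.secondCountable_of_separable X
  -- clopen sets form a neighborhood basis
  have hclopen : ∀ (x : X) (O : Set X), IsOpen O → x ∈ O →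
      ∃ W : Set X, IsClopen W ∧ x ∈ W ∧ W ⊆ O := by
    intro x O hO hx
    obtain ⟨r, hr, hball⟩ := Metric.isOpen_iff.mp hO x hx
    obtain ⟨U, hU, hxU, hsub⟩ := h0 x r hr
    exact ⟨U, hU, hxU, hsub.trans hball⟩
  obtain ⟨B, hBc, -, hB⟩ := exists_countable_basis X
  -- a choice of clopen set squeezed between two sets, when one exists
  set g : Set X × Set X → Set X := fun p =>
    if h : ∃ W : Set X, IsClopen W ∧ p.1 ⊆ W ∧ W ⊆ p.2 then h.choose else Set.univ
    with hg_def
  have hg_clopen : ∀ p, IsClopen (g p) := by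
    intro p
    rw [hg_def]
    dsimp only
    split
    · next h => exact h.choose_spec.1
    · exact isClopen_univ
  -- the countable clopen family
  set C : Set (Set X) := insert Set.univ (g '' (B ×ˢ B)) with hC_def
  have hCc : C.Countable := (Set.Countable.image (hBc.prod hBc) g).insert _
  have hCne : C.Nonempty := ⟨Set.univ, Set.mem_insert _ _⟩
  obtain ⟨e, he⟩ := Set.Countable.exists_eq_range hCc hCne
  have he_clopen : ∀ n, IsClopen (e n) := by
    intro n
    have : e n ∈ C := he ▸ Set.mem_range_self n
    rcases this with h | ⟨p, -, hp⟩
    · rw [h]; exact isClopen_univ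
    · rw [← hp]; exact hg_clopen p
  -- the family e is a basis
  have he_basis : ∀ (x : X) (O : Set X), IsOpen O → x ∈ O →
      ∃ n, x ∈ e n ∧ e n ⊆ O := by
    intro x O hO hx
    obtain ⟨V, hVB, hxV, hVO⟩ := hB.exists_subset_of_mem_open hx hO
    obtain ⟨W, hW, hxW, hWV⟩ := hclopen x V (hB.isOpen hVB) hxV
    obtain ⟨U, hUB, hxU, hUW⟩ := hB.exists_subset_of_mem_open hxW hW.2
    have hex : ∃ W' : Set X, IsClopen W' ∧ U ⊆ W' ∧ W' ⊆ V := ⟨W, hW, hUW, hWV⟩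
    have hmem : g (U, V) ∈ C := Set.mem_insert_of_mem _ ⟨(U, V), ⟨hUB, hVB⟩, rfl⟩
    rw [he] at hmem
    obtain ⟨n, hn⟩ := hmem
    have hspec := hex.choose_spec
    have hgeq : g (U, V) = hex.choose := by rw [hg_def]; exact dif_pos hex
    refine ⟨n, ?_, ?_⟩
    · rw [hn, hgeq]; exact hspec.2.1 hxU
    · rw [hn, hgeq]; exact hspec.2.2.trans hVO
  -- the embedding
  refine ⟨fun x n => ((e n).boolIndicator x).toNat, ?_⟩
  have hmem_iff : ∀ (x : X) (n : ℕ), ((e n).boolIndicator x).toNat = 1 ↔ x ∈ e n := by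
    intro x n
    by_cases h : x ∈ e n
    · simp [((e n).mem_iff_boolIndicator x).1 h, h]
    · simp [((e n).notMem_iff_boolIndicator x).1 h, h]
  have hcont : Continuous fun x : X => fun n => ((e n).boolIndicator x).toNat := by
    refine continuous_pi fun n => ?_
    exact (continuous_of_discreteTopology (f := Bool.toNat)).comp
      ((continuous_boolIndicator_iff_isClopen (e n)).2 (he_clopen n))
  have hinj : Function.Injective fun x : X => fun n => ((e n).boolIndicator x).toNat := by
    intro x y hxy
    by_contra hne
    obtain ⟨n, hxn, hsub⟩ := he_basis x {y}ᶜ (isOpen_compl_singleton) hne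
    have hyn : y ∉ e n := fun hy => hsub hy rfl
    have h1 : ((e n).boolIndicator x).toNat = 1 := (hmem_iff x n).2 hxn
    have h2 : ((e n).boolIndicator y).toNat ≠ 1 := fun h => hyn ((hmem_iff y n).1 h)
    have h3 : ((e n).boolIndicator x).toNat = ((e n).boolIndicator y).toNat :=
      congrFun hxy n
    exact h2 (h3 ▸ h1)
  refine ⟨isInducing_iff_nhds.2 fun x => le_antisymm ?_ ?_, hinj⟩
  · exact (hcont.tendsto x).le_comap
  · intro s hs
    obtain ⟨O, hOs, hO, hxO⟩ := mem_nhds_iff.mp hs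
    obtain ⟨n, hxn, hsub⟩ := he_basis x O hO hxO
    rw [Filter.mem_comap]
    refine ⟨{h : ℕ → ℕ | h n = 1}, ?_, ?_⟩
    · refine IsOpen.mem_nhds ?_ ((hmem_iff x n).2 hxn)
      exact isOpen_discrete {1} |>.preimage (continuous_apply n)
    · intro y hy
      exact hOs (hsub ((hmem_iff y n).1 hy))
end
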